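/- Let R = (R_1, …, R_n) be a preference profile over a finite candidate set C that is single-peaked with respect to a linear order >, and let D be a clone set for R with |D| ≥ 2. Then C can be partitioned into pairwise disjoint sets A_1, A_2, D_1, D_2, and P such that C \ D = A_1 ∪ P ∪ A_2, D = D_1 ∪ D_2, D_1 ≠ ∅, D_2 ≠ ∅, and A_1 > D_1 > P > D_2 > A_2 (every element of an earlier set is >-greater than every element of a later set). Furthermore, if P ≠ ∅, then peak(R) ⊆ P and, for each voter i, P ≻_i D and D ≻_i A_1 ∪ A_2. -/

import Mathlib

variable {α : Type*}

/-- `r` is a strict linear order (complete, transitive, antisymmetric) on the set `C`. -/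
def IsLinOn (C : Set α) (r : α → α → Prop) : Prop :=
  (∀ a ∈ C, ¬r a a) ∧
    (∀ a ∈ C, ∀ b ∈ C, ∀ c ∈ C, r a b → r b c → r a c) ∧
      ∀ a ∈ C, ∀ b ∈ C, a ≠ b → r a b ∨ r b a

/-- A preference profile over `C`: a (nonempty) finite tuple of linear orders on `C`. -/
def IsProfile (C : Set α) {n : ℕ} (R : Fin n → α → α → Prop) : Prop :=
  0 < n ∧ ∀ i, IsLinOn C (R i)

/-- `X` is a clone set for the profile `R` over `C`. -/
def IsCloneSet (C : Set α) {n : ℕ} (R : Fin n → α → α → Prop) (X : Set α) : Prop :=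
  X.Nonempty ∧ X ⊆ C ∧
    ∀ c ∈ X, ∀ c' ∈ X, ∀ a ∈ C \ X, ∀ i, (R i c a ↔ R i c' a)

/-- The clone structure of `R`: the family of all clone sets. -/
def cloneSets (C : Set α) {n : ℕ} (R : Fin n → α → α → Prop) : Set (Set α) :=
  {X | IsCloneSet C R X}

/-- `X` and `Y` intersect non-trivially. -/
def Bowtie (X Y : Set α) : Prop :=
  (X ∩ Y).Nonempty ∧ (X \ Y).Nonempty ∧ (Y \ X).Nonempty

/-- `r` is compatible with the societal axis `ax` on `C`. -/
def AxisCompatible (C : Set α) (ax r : α → α → Prop) : Prop :=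
  ∀ c ∈ C, ∀ d ∈ C, ∀ e ∈ C, ((ax c d ∧ ax d e) ∨ (ax e d ∧ ax d c)) → r c d → r d e

/-- The profile `R` is single-peaked with respect to the societal axis `ax`. -/
def SinglePeakedWrt (C : Set α) {n : ℕ} (R : Fin n → α → α → Prop)
    (ax : α → α → Prop) : Prop :=
  IsLinOn C ax ∧ ∀ i, AxisCompatible C ax (R i)

/-- The profile `R` is single-peaked. -/
def SinglePeaked (C : Set α) {n : ℕ} (R : Fin n → α → α → Prop) : Prop :=
  ∃ ax, SinglePeakedWrt C R ax

/-- `p` is the top-ranked candidate of the order `r` on `C`. -/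
def IsPeakOf (C : Set α) (r : α → α → Prop) (p : α) : Prop :=
  p ∈ C ∧ ∀ a ∈ C, a ≠ p → r p a

/-- The set of peaks of the profile `R`. -/
def peakSet (C : Set α) {n : ℕ} (R : Fin n → α → α → Prop) : Set α :=
  {p | ∃ i, IsPeakOf C (R i) p}

/-- Every element of `X` is `r`-related to every element of `Y`. -/
def SetGT (r : α → α → Prop) (X Y : Set α) : Prop := ∀ x ∈ X, ∀ y ∈ Y, r x y

/-!
A candidate `p ∉ D` lying on the axis between two clones `d > p > d'` is ranked above every clone
by every voter: if some voter ranked a clone above `p`, cloneness would make `d` beat `p`,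
single-peakedness would then make `p` beat `d'`, and cloneness again would make `d'` beat `p`.
Consequently, for any one voter, no clone lies between two such candidates, so they form a block
`P` that cuts `D` into a part `D₁` above `P` and a part `D₂` below it; the remaining candidates lie
above or below all of `D`. When `P` is nonempty, single-peakedness along the axis also forces every
voter to rank `D` above the outer candidates, so every peak lies in `P`.
-/

namespace IsLinOn

variable {C : Set α} {r : α → α → Prop} {a b : α}

theorem asymm (h : IsLinOn C r) (ha : a ∈ C) (hb : b ∈ C) (hab : r a b) : ¬r b a :=
  fun hba => h.1 a ha (h.2.1 a ha b hb a ha hab hba)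

theorem rel_of_not_rel (h : IsLinOn C r) (ha : a ∈ C) (hb : b ∈ C) (hne : a ≠ b)
    (hab : ¬r a b) : r b a :=
  (h.2.2 a ha b hb hne).resolve_left hab

end IsLinOn

theorem SetGT.mono {r : α → α → Prop} {X Y X' Y' : Set α} (h : SetGT r X Y) (hX : X' ⊆ X)
    (hY : Y' ⊆ Y) : SetGT r X' Y' :=
  fun x hx y hy => h x (hX hx) y (hY hy)

theorem SetGT.disjoint {r : α → α → Prop} {X Y : Set α} (h : SetGT r X Y)
    (hirr : ∀ x ∈ X, ¬r x x) : Disjoint X Y :=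
  Set.disjoint_left.mpr fun x hxX hxY => hirr x hxX (h x hxX x hxY)

section Axis

variable (C : Set α) (ax : α → α → Prop) (D : Set α)

/- For the axis `ax`, `axisAbove`, `axisBetween` and `axisBelow` are the sets `A₁`, `P` and `A₂`
of the statement. -/

def axisAbove : Set α := {a | a ∈ C \ D ∧ ∀ d ∈ D, ax a d}

def axisBelow : Set α := {a | a ∈ C \ D ∧ ∀ d ∈ D, ax d a}

def axisBetween : Set α := {a | a ∈ C \ D ∧ (∃ d ∈ D, ax d a) ∧ ∃ d ∈ D, ax a d}

variable {C ax D}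

theorem axisAbove_union_axisBetween_union_axisBelow (hax : IsLinOn C ax) (hDC : D ⊆ C) :
    axisAbove C ax D ∪ axisBetween C ax D ∪ axisBelow C ax D = C \ D := by
  refine Set.Subset.antisymm ?_ fun a ha => ?_
  · rintro a ((ha | ha) | ha) <;> exact ha.1
  by_cases habove : ∀ d ∈ D, ax a d
  · exact .inl (.inl ⟨ha, habove⟩)
  by_cases hbelow : ∀ d ∈ D, ax d a
  · exact .inr ⟨ha, hbelow⟩
  push Not at habove hbelow
  obtain ⟨d, hd, had⟩ := habove
  obtain ⟨d', hd', hd'a⟩ := hbelow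
  refine .inl (.inr ⟨ha, ⟨d, hd, ?_⟩, d', hd', ?_⟩)
  · exact hax.rel_of_not_rel ha.1 (hDC hd) (ne_of_mem_of_not_mem hd ha.2).symm had
  · exact hax.rel_of_not_rel (hDC hd') ha.1 (ne_of_mem_of_not_mem hd' ha.2) hd'a

theorem setGT_sep_diff (hax : IsLinOn C ax) (hDC : D ⊆ C) {c : α} (hc : c ∈ C) :
    SetGT ax {d ∈ D | ax d c} (D \ {d ∈ D | ax d c}) := by
  rintro d ⟨hd, hdc⟩ e ⟨he, hec⟩
  rcases eq_or_ne e c with rfl | hne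
  · exact hdc
  have hce : ax c e := hax.rel_of_not_rel (hDC he) hc hne fun h => hec ⟨he, h⟩
  exact hax.2.1 d (hDC hd) c hc e (hDC he) hdc hce

theorem exists_split_around_axisBetween (hax : IsLinOn C ax) (hDC : D ⊆ C) (hcard : 2 ≤ D.ncard)
    (hsep : ∀ p ∈ axisBetween C ax D, ∀ p' ∈ axisBetween C ax D, ∀ d ∈ D, ax p d → ¬ax d p') :
    ∃ D₁ D₂ : Set α, D₁ ∪ D₂ = D ∧ D₁.Nonempty ∧ D₂.Nonempty ∧
      SetGT ax D₁ (axisBetween C ax D) ∧ SetGT ax (axisBetween C ax D) D₂ ∧ SetGT ax D₁ D₂ := by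
  rcases (axisBetween C ax D).eq_empty_or_nonempty with hP | ⟨p₀, hp₀⟩
  · obtain ⟨d, hd, d', hd', hne⟩ := (Set.one_lt_ncard_iff_nontrivial_and_finite.mp hcard).1
    obtain ⟨x, hx, y, hy, hxy⟩ : ∃ x ∈ D, ∃ y ∈ D, ax x y := by
      rcases hax.2.2 d (hDC hd) d' (hDC hd') hne with h | h
      exacts [⟨d, hd, d', hd', h⟩, ⟨d', hd', d, hd, h⟩]
    refine ⟨_, _, Set.union_sdiff_cancel (Set.sep_subset D (ax · y)), ⟨x, hx, hxy⟩,
      ⟨y, hy, fun h => hax.1 y (hDC hy) h.2⟩, ?_, ?_, setGT_sep_diff hax hDC (hDC hy)⟩ <;>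
      simp [hP, SetGT]
  obtain ⟨hp₀C, ⟨d₁, hd₁, hd₁p₀⟩, d₂, hd₂, hp₀d₂⟩ := id hp₀
  refine ⟨_, _, Set.union_sdiff_cancel (Set.sep_subset D (ax · p₀)), ⟨d₁, hd₁, hd₁p₀⟩,
    ⟨d₂, hd₂, fun h => hax.asymm hp₀C.1 (hDC hd₂) hp₀d₂ h.2⟩, ?_, ?_,
    setGT_sep_diff hax hDC hp₀C.1⟩
  · rintro d ⟨hd, hdp₀⟩ p hp
    by_contra hdp
    have hpd := hax.rel_of_not_rel (hDC hd) hp.1.1 (ne_of_mem_of_not_mem hd hp.1.2) hdp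
    exact hsep p hp p₀ hp₀ d hd hpd hdp₀
  · rintro p hp e ⟨he, hep₀⟩
    by_contra hpe
    have hp₀e : ax p₀ e := hax.rel_of_not_rel (hDC he) hp₀C.1
      (ne_of_mem_of_not_mem he hp₀C.2) fun h => hep₀ ⟨he, h⟩
    exact hsep p₀ hp₀ p hp e he hp₀e
      (hax.rel_of_not_rel hp.1.1 (hDC he) (ne_of_mem_of_not_mem he hp.1.2).symm hpe)

theorem pairwise_setGT_axis_partition (hax : IsLinOn C ax) (hDC : D ⊆ C) (hDne : D.Nonempty)
    {D₁ D₂ : Set α} (hD₁ : D₁ ⊆ D) (hD₂ : D₂ ⊆ D) (hD₁P : SetGT ax D₁ (axisBetween C ax D))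
    (hPD₂ : SetGT ax (axisBetween C ax D) D₂) (hD₁D₂ : SetGT ax D₁ D₂) :
    List.Pairwise (SetGT ax)
      [axisAbove C ax D, D₁, axisBetween C ax D, D₂, axisBelow C ax D] := by
  have hAD : SetGT ax (axisAbove C ax D) D := fun a ha d hd => ha.2 d hd
  have hDA : SetGT ax D (axisBelow C ax D) := fun d hd a ha => ha.2 d hd
  have hAP : SetGT ax (axisAbove C ax D) (axisBetween C ax D) := by
    rintro a ha p ⟨hp, ⟨d, hd, hdp⟩, -⟩
    exact hax.2.1 a ha.1.1 d (hDC hd) p hp.1 (ha.2 d hd) hdp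
  have hPA : SetGT ax (axisBetween C ax D) (axisBelow C ax D) := by
    rintro p ⟨hp, -, d, hd, hpd⟩ a ha
    exact hax.2.1 p hp.1 d (hDC hd) a ha.1.1 hpd (ha.2 d hd)
  have hAA : SetGT ax (axisAbove C ax D) (axisBelow C ax D) := by
    obtain ⟨d, hd⟩ := hDne
    exact fun a ha b hb => hax.2.1 a ha.1.1 d (hDC hd) b hb.1.1 (ha.2 d hd) (hb.2 d hd)
  simp only [List.pairwise_cons, List.mem_cons, List.not_mem_nil, or_false, forall_eq_or_imp,
    forall_eq, false_implies, implies_true, List.Pairwise.nil, and_true]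
  exact ⟨⟨hAD.mono le_rfl hD₁, hAP, hAD.mono le_rfl hD₂, hAA⟩, ⟨hD₁P, hD₁D₂,
    hDA.mono hD₁ le_rfl⟩, ⟨hPD₂, hPA⟩, hDA.mono hD₂ le_rfl⟩

end Axis

section Voter

variable {C D : Set α} {ax r : α → α → Prop}

theorem rel_of_mem_axisBetween (hr : IsLinOn C r) (hcomp : AxisCompatible C ax r) (hDC : D ⊆ C)
    (hclone : ∀ c ∈ D, ∀ c' ∈ D, ∀ a ∈ C \ D, (r c a ↔ r c' a)) {p d : α}
    (hp : p ∈ axisBetween C ax D) (hd : d ∈ D) : r p d := by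
  obtain ⟨hpCD, ⟨d₁, hd₁, hd₁p⟩, d₂, hd₂, hpd₂⟩ := hp
  by_contra hpd
  have hd₁p' : r d₁ p := (hclone d hd d₁ hd₁ p hpCD).mp
    (hr.rel_of_not_rel hpCD.1 (hDC hd) (ne_of_mem_of_not_mem hd hpCD.2).symm hpd)
  have hpd₂' : r p d₂ := hcomp d₁ (hDC hd₁) p hpCD.1 d₂ (hDC hd₂) (.inl ⟨hd₁p, hpd₂⟩) hd₁p'
  exact hr.asymm hpCD.1 (hDC hd₂) hpd₂' ((hclone d₁ hd₁ d₂ hd₂ p hpCD).mp hd₁p')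

theorem rel_of_mem_axisAbove_union_axisBelow (hr : IsLinOn C r)
    (hcomp : AxisCompatible C ax r) (hDC : D ⊆ C)
    (hclone : ∀ c ∈ D, ∀ c' ∈ D, ∀ a ∈ C \ D, (r c a ↔ r c' a)) {p d a : α}
    (hp : p ∈ axisBetween C ax D) (hd : d ∈ D) (ha : a ∈ axisAbove C ax D ∪ axisBelow C ax D) :
    r d a := by
  obtain ⟨hpCD, ⟨d₁, hd₁, hd₁p⟩, d₂, hd₂, hpd₂⟩ := id hp
  rcases ha with ha | ha
  · refine (hclone d₁ hd₁ d hd a ha.1).mp (hcomp p hpCD.1 d₁ (hDC hd₁) a ha.1.1 ?_ ?_)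
    exacts [.inr ⟨ha.2 d₁ hd₁, hd₁p⟩, rel_of_mem_axisBetween hr hcomp hDC hclone hp hd₁]
  · refine (hclone d₂ hd₂ d hd a ha.1).mp (hcomp p hpCD.1 d₂ (hDC hd₂) a ha.1.1 ?_ ?_)
    exacts [.inl ⟨hpd₂, ha.2 d₂ hd₂⟩, rel_of_mem_axisBetween hr hcomp hDC hclone hp hd₂]

theorem mem_axisBetween_of_isPeakOf (hax : IsLinOn C ax) (hr : IsLinOn C r)
    (hcomp : AxisCompatible C ax r) (hDC : D ⊆ C)
    (hclone : ∀ c ∈ D, ∀ c' ∈ D, ∀ a ∈ C \ D, (r c a ↔ r c' a)) {p q : α}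
    (hp : p ∈ axisBetween C ax D) (hq : IsPeakOf C r q) : q ∈ axisBetween C ax D := by
  obtain ⟨hqC, hqr⟩ := hq
  obtain ⟨d, hd, -⟩ := hp.2.1
  by_cases hqD : q ∈ D
  · have hpq := rel_of_mem_axisBetween hr hcomp hDC hclone hp hqD
    exact absurd (hqr p hp.1.1 (ne_of_mem_of_not_mem hqD hp.1.2).symm)
      (hr.asymm hp.1.1 hqC hpq)
  have hqCD : q ∈ C \ D := ⟨hqC, hqD⟩
  rw [← axisAbove_union_axisBetween_union_axisBelow hax hDC, Set.union_right_comm] at hqCD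
  refine hqCD.resolve_left fun hq => ?_
  exact hr.asymm (hDC hd) hqC (rel_of_mem_axisAbove_union_axisBelow hr hcomp hDC hclone hp hd hq)
    (hqr d (hDC hd) (ne_of_mem_of_not_mem hd hqD))

theorem not_rel_of_mem_axisBetween (hr : IsLinOn C r) (hcomp : AxisCompatible C ax r)
    (hDC : D ⊆ C) (hclone : ∀ c ∈ D, ∀ c' ∈ D, ∀ a ∈ C \ D, (r c a ↔ r c' a)) {p p' d : α}
    (hp : p ∈ axisBetween C ax D) (hp' : p' ∈ axisBetween C ax D) (hd : d ∈ D)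
    (hpd : ax p d) : ¬ax d p' := fun hdp' =>
  hr.asymm hp'.1.1 (hDC hd) (rel_of_mem_axisBetween hr hcomp hDC hclone hp' hd)
    (hcomp p hp.1.1 d (hDC hd) p' hp'.1.1 (.inl ⟨hpd, hdp'⟩)
      (rel_of_mem_axisBetween hr hcomp hDC hclone hp hd))

end Voter

theorem clone_partition_single_peaked_general (C : Set α) {n : ℕ}
    (R : Fin n → α → α → Prop) (hR : IsProfile C R)
    (gt : α → α → Prop) (hsp : SinglePeakedWrt C R gt)
    (D : Set α) (hD : IsCloneSet C R D) (hcard : 2 ≤ D.ncard) :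
    ∃ A₁ A₂ D₁ D₂ P : Set α,
      List.Pairwise Disjoint [A₁, D₁, P, D₂, A₂] ∧
      A₁ ∪ P ∪ A₂ = C \ D ∧ D₁ ∪ D₂ = D ∧ D₁.Nonempty ∧ D₂.Nonempty ∧
      List.Pairwise (SetGT gt) [A₁, D₁, P, D₂, A₂] ∧
      (P.Nonempty →
        peakSet C R ⊆ P ∧ ∀ i, SetGT (R i) P D ∧ SetGT (R i) D (A₁ ∪ A₂)) := by
  obtain ⟨hn, hlin⟩ := hR
  obtain ⟨hgt, hcomp⟩ := hsp
  obtain ⟨hDne, hDC, hclone⟩ := hD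
  have hvoter i : ∀ c ∈ D, ∀ c' ∈ D, ∀ a ∈ C \ D, (R i c a ↔ R i c' a) :=
    fun c hc c' hc' a ha => hclone c hc c' hc' a ha i
  obtain ⟨D₁, D₂, hsplit, hD₁ne, hD₂ne, hD₁P, hPD₂, hD₁D₂⟩ :=
    exists_split_around_axisBetween hgt hDC hcard fun _ hp _ hp' _ hd =>
      not_rel_of_mem_axisBetween (hlin ⟨0, hn⟩) (hcomp _) hDC (hvoter _) hp hp' hd
  have hD₁ : D₁ ⊆ D := Set.subset_union_left.trans hsplit.subset
  have hD₂ : D₂ ⊆ D := Set.subset_union_right.trans hsplit.subset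
  have hord := pairwise_setGT_axis_partition hgt hDC hDne hD₁ hD₂ hD₁P hPD₂ hD₁D₂
  have hsubC : ∀ X ∈ [axisAbove C gt D, D₁, axisBetween C gt D, D₂, axisBelow C gt D], X ⊆ C := by
    simp only [List.mem_cons, List.not_mem_nil, or_false]
    rintro X (rfl | rfl | rfl | rfl | rfl)
    exacts [fun a ha => ha.1.1, hD₁.trans hDC, fun a ha => ha.1.1, hD₂.trans hDC,
      fun a ha => ha.1.1]
  have hdisj := hord.imp_of_mem fun hX _ h => h.disjoint fun x hx => hgt.1 x (hsubC _ hX hx)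
  refine ⟨_, _, D₁, D₂, _, hdisj, axisAbove_union_axisBetween_union_axisBelow hgt hDC, hsplit,
    hD₁ne, hD₂ne, hord, fun ⟨p, hp⟩ => ⟨?_, fun i => ⟨?_, ?_⟩⟩⟩
  · rintro q ⟨i, hq⟩
    exact mem_axisBetween_of_isPeakOf hgt (hlin i) (hcomp i) hDC (hvoter i) hp hq
  · exact fun p' hp' d hd => rel_of_mem_axisBetween (hlin i) (hcomp i) hDC (hvoter i) hp' hd
  · exact fun d hd a ha =>
      rel_of_mem_axisAbove_union_axisBelow (hlin i) (hcomp i) hDC (hvoter i) hp hd ha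

theorem clone_partition_single_peaked (C : Set α) (hC : C.Finite) {n : ℕ}
    (R : Fin n → α → α → Prop) (hR : IsProfile C R)
    (gt : α → α → Prop) (hsp : SinglePeakedWrt C R gt)
    (D : Set α) (hD : IsCloneSet C R D) (hcard : 2 ≤ D.ncard) :
    ∃ A₁ A₂ D₁ D₂ P : Set α,
      List.Pairwise Disjoint [A₁, D₁, P, D₂, A₂] ∧
      A₁ ∪ P ∪ A₂ = C \ D ∧ D₁ ∪ D₂ = D ∧ D₁.Nonempty ∧ D₂.Nonempty ∧
      List.Pairwise (SetGT gt) [A₁, D₁, P, D₂, A₂] ∧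
      (P.Nonempty →
        peakSet C R ⊆ P ∧ ∀ i, SetGT (R i) P D ∧ SetGT (R i) D (A₁ ∪ A₂)) :=
  clone_partition_single_peaked_general C R hR gt hsp D hD hcard
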